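/- Let (λ, μ, ν) be an ℕ-representation of dimension k recognizing the characteristic series of L. Define the representation (η, κ, ζ) of dimension 2k+1 by block matrices: η = (1, λ, 0), κ(a) = [[1, 0, λ], [0, μ(a), σ_a], [0, 0, σ]], ζ = (0, 0, ν)^T, where σ = Σ_{b∈A} μ(b) and σ_a = Σ_{b<a} μ(b). Then for every word u ∈ A*, η·κ(u)·ζ = λ·(Σ_{v≺u} μ(v))·ν. -/

import Mathlib

open Matrix

/-- The radix order on words over a totally ordered alphabet. -/
def radixLt {A : Type*} [LinearOrder A] (u v : List A) : Prop :=
  u.length < v.length ∨ (u.length = v.length ∧ List.Lex (· < ·) u v)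

/-- The block matrix `κ(a) = [[1,0,λ],[0,μ(a),σ_a],[0,0,σ]]` of dimension
`2k+1` (index type `Unit ⊕ Fin k ⊕ Fin k`). -/
def kappaLetter {A : Type*} [Fintype A] [LinearOrder A] {k : ℕ}
    (μ1 : A → Matrix (Fin k) (Fin k) ℕ) (lam : Fin k → ℕ) (a : A) :
    Matrix (Unit ⊕ Fin k ⊕ Fin k) (Unit ⊕ Fin k ⊕ Fin k) ℕ :=
  fun i j => match i, j with
  | Sum.inl _, Sum.inl _ => 1
  | Sum.inl _, Sum.inr (Sum.inl _) => 0
  | Sum.inl _, Sum.inr (Sum.inr q) => lam q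
  | Sum.inr (Sum.inl _), Sum.inl _ => 0
  | Sum.inr (Sum.inl p), Sum.inr (Sum.inl q) => μ1 a p q
  | Sum.inr (Sum.inl p), Sum.inr (Sum.inr q) =>
      (∑ b ∈ Finset.univ.filter (· < a), μ1 b) p q
  | Sum.inr (Sum.inr _), Sum.inl _ => 0
  | Sum.inr (Sum.inr _), Sum.inr (Sum.inl _) => 0
  | Sum.inr (Sum.inr p), Sum.inr (Sum.inr q) => (∑ b : A, μ1 b) p q

/-- The multiplicative extension of `κ` from letters to words. -/
def kappaWord {A : Type*} [Fintype A] [LinearOrder A] {k : ℕ}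
    (μ1 : A → Matrix (Fin k) (Fin k) ℕ) (lam : Fin k → ℕ) (w : List A) :
    Matrix (Unit ⊕ Fin k ⊕ Fin k) (Unit ⊕ Fin k ⊕ Fin k) ℕ :=
  (w.map (kappaLetter μ1 lam)).prod

/-- The row vector `η = (1, λ, 0)`. -/
def etaVec {k : ℕ} (lam : Fin k → ℕ) : Unit ⊕ Fin k ⊕ Fin k → ℕ :=
  Sum.elim (fun _ => 1) (Sum.elim lam (fun _ => 0))

/-- The column vector `ζ = (0, 0, ν)ᵀ`. -/
def zetaVec {k : ℕ} (ν : Fin k → ℕ) : Unit ⊕ Fin k ⊕ Fin k → ℕ :=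
  Sum.elim (fun _ => 0) (Sum.elim (fun _ => 0) ν)

/-!
Write `S(u) = ∑_{v ≺ u} μ(v)`. By induction on `u`, the row vector `η κ(u)` is
`(1, λ μ(u), λ S(u))`. The predecessors of `u a` in the radix order are `ε`, the words `w b`
with `w ≺ u`, and the words `u b` with `b < a`, so `S(u a) = 1 + μ(u) σ_a + S(u) σ`; this is
exactly the recursion carried out by the third block column of `κ(a)`. Pairing with `ζ` keeps
only the last block, `λ S(u) ν`.
-/

namespace List

theorem lex_append_iff_of_length_eq {α : Type*} {r : α → α → Prop} {w u : List α}
    (h : w.length = u.length) (w' u' : List α) :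
    Lex r (w ++ w') (u ++ u') ↔ Lex r w u ∨ w = u ∧ Lex r w' u' := by
  induction w generalizing u with
  | nil =>
    obtain rfl := List.eq_nil_of_length_eq_zero h.symm
    simp [List.not_lex_nil]
  | cons c w ih =>
    obtain _ | ⟨d, u⟩ := u
    · simp at h
    · simp only [cons_append, cons_lex_cons_iff, ih (Nat.succ_injective h), cons.injEq]
      tauto

theorem append_singleton_injective {α : Type*} :
    Function.Injective (fun p : List α × α => p.1 ++ [p.2]) :=
  fun _ _ h => Prod.ext (append_inj' h rfl).1 (singleton_injective (append_inj' h rfl).2)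

end List

section RadixOrder

variable {A : Type*} [LinearOrder A]

theorem not_radixLt_nil (v : List A) : ¬ radixLt v [] := by
  rintro (h | ⟨-, h⟩)
  · exact Nat.not_lt_zero _ h
  · exact List.not_lex_nil h

theorem radixLt_irrefl (u : List A) : ¬ radixLt u u := by
  rintro (h | ⟨-, h⟩)
  · exact lt_irrefl _ h
  · exact irrefl u h

theorem nil_radixLt_append_singleton (u : List A) (a : A) : radixLt [] (u ++ [a]) :=
  Or.inl (by simp)

theorem radixLt_append_singleton_iff {w u : List A} {b a : A} :
    radixLt (w ++ [b]) (u ++ [a]) ↔ radixLt w u ∨ w = u ∧ b < a := by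
  by_cases h : w.length = u.length
  · simp [radixLt, h, List.lex_append_iff_of_length_eq h]
  · have : w ≠ u := fun e => h (congrArg List.length e)
    simp only [radixLt, List.length_append, List.length_singleton, add_lt_add_iff_right,
      Nat.add_right_cancel_iff, h, this, false_and, or_false]

end RadixOrder

section Predecessors

open Finset

variable {A : Type*} [Fintype A] [LinearOrder A]

theorem toFinset_radixLt_append_singleton {u : List A} {a : A}
    (hu : {v | radixLt v u}.Finite) (hua : {v | radixLt v (u ++ [a])}.Finite) :
    hua.toFinset = insert []
      ((hu.toFinset ×ˢ univ).image (fun p => p.1 ++ [p.2]) ∪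
        (univ.filter (· < a)).image (fun b => u ++ [b])) := by
  ext v
  rcases List.eq_nil_or_concat v with rfl | ⟨w, b, rfl⟩
  · simp [nil_radixLt_append_singleton]
  · simp [radixLt_append_singleton_iff, eq_comm (a := u) (b := w), and_comm (a := w = u)]

theorem sum_radixLt_append_singleton {M : Type*} [AddCommMonoid M] (f : List A → M)
    {u : List A} {a : A}
    (hu : {v | radixLt v u}.Finite) (hua : {v | radixLt v (u ++ [a])}.Finite) :
    ∑ v ∈ hua.toFinset, f v =
      f [] + ∑ w ∈ hu.toFinset, ∑ b, f (w ++ [b]) + ∑ b ∈ univ.filter (· < a), f (u ++ [b]) := by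
  have h_nil : [] ∉ (hu.toFinset ×ˢ univ).image (fun p => p.1 ++ [p.2]) ∪
      (univ.filter (· < a)).image (fun b => u ++ [b]) := by simp
  have h_disj : Disjoint ((hu.toFinset ×ˢ univ).image (fun p => p.1 ++ [p.2]))
      ((univ.filter (· < a)).image (fun b => u ++ [b])) := by
    simp only [disjoint_left, mem_image, mem_product, Set.Finite.mem_toFinset, not_exists,
      not_and]
    rintro _ ⟨⟨w, b⟩, ⟨hw, -⟩, rfl⟩ b' - h
    obtain ⟨rfl, -⟩ := List.append_inj' h rfl
    exact radixLt_irrefl u hw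
  rw [toFinset_radixLt_append_singleton hu hua, sum_insert h_nil, sum_union h_disj,
    sum_image fun _ _ _ _ h => List.append_singleton_injective h,
    sum_image fun _ _ _ _ h => List.singleton_injective (List.append_cancel_left h),
    sum_product, add_assoc]

end Predecessors

section BlockRepresentation

open Finset

variable {A : Type*} [Fintype A] [LinearOrder A] {k : ℕ}

def blockVec (c : ℕ) (g h : Fin k → ℕ) : Unit ⊕ Fin k ⊕ Fin k → ℕ :=
  Sum.elim (fun _ => c) (Sum.elim g h)

theorem etaVec_eq_blockVec (lam : Fin k → ℕ) : etaVec lam = blockVec 1 lam 0 := rfl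

theorem zetaVec_eq_blockVec (ν : Fin k → ℕ) : zetaVec ν = blockVec 0 0 ν := rfl

theorem blockVec_dotProduct_blockVec (c c' : ℕ) (g g' h h' : Fin k → ℕ) :
    blockVec c g h ⬝ᵥ blockVec c' g' h' = c * c' + g ⬝ᵥ g' + h ⬝ᵥ h' := by
  simp [blockVec, dotProduct, Fintype.sum_sum_type, add_assoc]

theorem blockVec_vecMul_kappaLetter (μ1 : A → Matrix (Fin k) (Fin k) ℕ) (lam : Fin k → ℕ)
    (a : A) (c : ℕ) (g h : Fin k → ℕ) :
    blockVec c g h ᵥ* kappaLetter μ1 lam a =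
      blockVec c (g ᵥ* μ1 a)
        (c • lam + g ᵥ* ∑ b ∈ univ.filter (· < a), μ1 b + h ᵥ* ∑ b, μ1 b) := by
  ext (_ | _ | _) <;>
    simp [blockVec, vecMul, dotProduct, Fintype.sum_sum_type, kappaLetter, add_assoc]

theorem kappaWord_append (μ1 : A → Matrix (Fin k) (Fin k) ℕ) (lam : Fin k → ℕ)
    (u v : List A) :
    kappaWord μ1 lam (u ++ v) = kappaWord μ1 lam u * kappaWord μ1 lam v := by
  simp [kappaWord]

theorem kappaWord_singleton (μ1 : A → Matrix (Fin k) (Fin k) ℕ) (lam : Fin k → ℕ) (a : A) :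
    kappaWord μ1 lam [a] = kappaLetter μ1 lam a := by
  simp [kappaWord]

theorem etaVec_vecMul_kappaWord (μ : List A → Matrix (Fin k) (Fin k) ℕ)
    (hμ1 : μ [] = 1) (hμm : ∀ u v : List A, μ (u ++ v) = μ u * μ v)
    (lam : Fin k → ℕ) (hfin : ∀ u : List A, {v | radixLt v u}.Finite) (u : List A) :
    etaVec lam ᵥ* kappaWord (fun a => μ [a]) lam u =
      blockVec 1 (lam ᵥ* μ u) (lam ᵥ* ∑ v ∈ (hfin u).toFinset, μ v) := by
  induction u using List.reverseRecOn with
  | nil =>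
    have h_empty : (hfin []).toFinset = ∅ :=
      Set.Finite.toFinset_eq_empty.mpr (Set.eq_empty_of_forall_notMem not_radixLt_nil)
    simp [kappaWord, h_empty, hμ1, etaVec_eq_blockVec]
  | append_singleton u a ih =>
    have h_sum : ∑ v ∈ (hfin (u ++ [a])).toFinset, μ v =
        1 + μ u * ∑ b ∈ univ.filter (· < a), μ [b] +
          (∑ v ∈ (hfin u).toFinset, μ v) * ∑ b, μ [b] := by
      rw [sum_radixLt_append_singleton μ (hfin u), add_right_comm]
      simp only [hμ1, hμm, ← Finset.sum_mul, ← Finset.mul_sum]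
    rw [kappaWord_append, kappaWord_singleton, ← vecMul_vecMul, ih, blockVec_vecMul_kappaLetter,
      h_sum, hμm]
    simp only [vecMul_add, vecMul_vecMul, vecMul_one, one_smul]

end BlockRepresentation

theorem block_rep_computes_initial_segment_general {A : Type*} [Fintype A] [LinearOrder A]
    (k : ℕ) (μ : List A → Matrix (Fin k) (Fin k) ℕ)
    (hμ1 : μ [] = 1) (hμm : ∀ u v : List A, μ (u ++ v) = μ u * μ v)
    (lam ν : Fin k → ℕ)
    (hfin : ∀ u : List A, {v | radixLt v u}.Finite)
    (u : List A) :
    etaVec lam ⬝ᵥ (kappaWord (fun a => μ [a]) lam u *ᵥ zetaVec ν) =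
      lam ⬝ᵥ ((∑ v ∈ (hfin u).toFinset, μ v) *ᵥ ν) := by
  rw [dotProduct_mulVec, etaVec_vecMul_kappaWord μ hμ1 hμm lam hfin u, zetaVec_eq_blockVec,
    blockVec_dotProduct_blockVec, dotProduct_mulVec]
  simp

/-- The block representation `(η, κ, ζ)` of dimension `2k+1` computes the
quantity `λ·μ(P(u))·ν` for every word `u`. -/
theorem block_rep_computes_initial_segment {A : Type*} [Fintype A] [LinearOrder A]
    (k : ℕ) (μ : List A → Matrix (Fin k) (Fin k) ℕ)
    (hμ1 : μ [] = 1) (hμm : ∀ u v : List A, μ (u ++ v) = μ u * μ v)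
    (lam ν : Fin k → ℕ) (L : Set (List A)) [DecidablePred (· ∈ L)]
    (hchar : ∀ w : List A, lam ⬝ᵥ (μ w *ᵥ ν) = if w ∈ L then 1 else 0)
    (hfin : ∀ u : List A, {v | radixLt v u}.Finite)
    (u : List A) :
    etaVec lam ⬝ᵥ (kappaWord (fun a => μ [a]) lam u *ᵥ zetaVec ν) =
      lam ⬝ᵥ ((∑ v ∈ (hfin u).toFinset, μ v) *ᵥ ν) :=
  block_rep_computes_initial_segment_general k μ hμ1 hμm lam ν hfin u
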